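/- arXiv:2108.04597 — 8 statements merged into one kernel-verified Lean document; each statement's English description precedes it below -/
import Mathlib

section
/- Let X be a metric space, let μ₀ be a Borel probability measure on X, and suppose μ₀ has an Onsager–Machlup functional on a nonempty subset E ⊆ supp(μ₀) and that property M(μ₀, E) holds. Let Φ : X → ℝ be Borel measurable and bounded on bounded subsets of X, suppose Z := ∫_X exp(−Φ(x)) dμ₀(x) ∈ (0, ∞), and define the Borel probability measure μ by μ(A) = Z⁻¹ ∫_A exp(−Φ(x)) dμ₀(x). Then property M(μ, E) holds, i.e. there exists x⋆ ∈ E such that for every x ∈ X ∖ E, lim_{r→0} μ(B(x,r))/μ(B(x⋆,r)) = 0. -/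
open MeasureTheory Metric Filter Set Topology ENNReal

noncomputable section

/-- The topological support of a Borel measure on a metric space: the set of points all of
whose open balls have positive measure. -/
def measureSupport {X : Type*} [PseudoMetricSpace X] [MeasurableSpace X]
    (μ : Measure X) : Set X :=
  {x | ∀ r > 0, 0 < μ (Metric.ball x r)}

/-- `I` is an Onsager--Machlup functional for `μ` on `E`: for all `x₁ x₂ ∈ E`, the ratio of
small-ball probabilities tends to `exp (I x₂ - I x₁)` as the radius tends to `0⁺`. -/
def IsOMFunctional {X : Type*} [PseudoMetricSpace X] [MeasurableSpace X]
    (μ : Measure X) (E : Set X) (I : X → ℝ) : Prop :=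
  ∀ x₁ ∈ E, ∀ x₂ ∈ E,
    Filter.Tendsto (fun r : ℝ => μ (Metric.ball x₁ r) / μ (Metric.ball x₂ r))
      (𝓝[>] 0) (𝓝 (ENNReal.ofReal (Real.exp (I x₂ - I x₁))))

/-- Property `M(μ, E)`: there is `x⋆ ∈ E` such that for every `x ∉ E` the small-ball
probability ratio `μ(B(x,r)) / μ(B(x⋆,r))` tends to `0` as `r → 0⁺`. -/
def PropertyM {X : Type*} [PseudoMetricSpace X] [MeasurableSpace X]
    (μ : Measure X) (E : Set X) : Prop :=
  ∃ xs ∈ E, ∀ x ∉ E,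
    Filter.Tendsto (fun r : ℝ => μ (Metric.ball x r) / μ (Metric.ball xs r)) (𝓝[>] 0) (𝓝 0)

/-!
Near each point, a density bounded above and away from zero multiplies the measure of small balls
by a factor between two positive constants. For fixed centres `x` and `x⋆` the small-ball ratio
therefore changes by at most a bounded factor, and a ratio tending to zero still tends to zero. The
density `exp (-Φ)` is of this kind because `Φ` is bounded on balls, and the normalisation `Z⁻¹`
cancels in every ratio.
-/

lemma ENNReal.tendsto_div_nhds_zero_of_le_mul {α : Type*} {l : Filter α}
    {f g f' g' : α → ℝ≥0∞} {a b : ℝ≥0∞} (ha : a ≠ ∞) (hb₀ : b ≠ 0) (hb : b ≠ ∞)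
    (h : Tendsto (fun t => f t / g t) l (𝓝 0))
    (hf : ∀ᶠ t in l, f' t ≤ a * f t) (hg : ∀ᶠ t in l, b * g t ≤ g' t) :
    Tendsto (fun t => f' t / g' t) l (𝓝 0) := by
  have hlim : Tendsto (fun t => a / b * (f t / g t)) l (𝓝 0) := by
    simpa using ENNReal.Tendsto.const_mul h (.inr (ENNReal.div_ne_top ha hb₀))
  refine tendsto_of_tendsto_of_tendsto_of_le_of_le' tendsto_const_nhds hlim
    (.of_forall fun _ => zero_le) ?_
  filter_upwards [hf, hg] with t hft hgt
  calc f' t / g' t ≤ a * f t / (b * g t) := ENNReal.div_le_div hft hgt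
    _ = a / b * (f t / g t) := ENNReal.mul_div_mul_comm (.inl hb₀) (.inl hb)

lemma ENNReal.ofReal_exp_neg_mem_Icc_of_abs_le {t C : ℝ} (h : |t| ≤ C) :
    ENNReal.ofReal (Real.exp (-t)) ∈
      Icc (ENNReal.ofReal (Real.exp (-C))) (ENNReal.ofReal (Real.exp C)) := by
  obtain ⟨h₁, h₂⟩ := abs_le.1 h
  exact ⟨ofReal_le_ofReal (Real.exp_le_exp.2 (by linarith)),
    ofReal_le_ofReal (Real.exp_le_exp.2 (by linarith))⟩

namespace MeasureTheory

variable {X : Type*} [MeasurableSpace X] {μ : Measure X} {f : X → ℝ≥0∞} {s : Set X}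

lemma withDensity_apply_le_mul {a : ℝ≥0∞} (hs : MeasurableSet s) (h : ∀ x ∈ s, f x ≤ a) :
    μ.withDensity f s ≤ a * μ s := by
  rw [withDensity_apply _ hs, ← setLIntegral_const]
  exact setLIntegral_mono' hs h

lemma mul_le_withDensity_apply {b : ℝ≥0∞} (hs : MeasurableSet s) (h : ∀ x ∈ s, b ≤ f x) :
    b * μ s ≤ μ.withDensity f s := by
  rw [withDensity_apply _ hs, ← setLIntegral_const]
  exact setLIntegral_mono' hs h

end MeasureTheory

namespace PropertyM

variable {X : Type*} [PseudoMetricSpace X] [MeasurableSpace X] {μ : Measure X} {E : Set X}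

lemma smul (hM : PropertyM μ E) {c : ℝ≥0∞} (hc₀ : c ≠ 0) (hc : c ≠ ∞) :
    PropertyM (c • μ) E := by
  obtain ⟨xs, hxs, h⟩ := hM
  refine ⟨xs, hxs, fun x hx => ?_⟩
  simpa only [Measure.smul_apply, smul_eq_mul, ENNReal.mul_div_mul_left _ _ hc₀ hc] using h x hx

lemma withDensity [OpensMeasurableSpace X] (hM : PropertyM μ E) {f : X → ℝ≥0∞}
    (hf : ∀ x, ∃ a ≠ ∞, ∃ b ≠ 0, ∀ᶠ y in 𝓝 x, f y ∈ Icc b a) :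
    PropertyM (μ.withDensity f) E := by
  obtain ⟨xs, hxs, h⟩ := hM
  refine ⟨xs, hxs, fun x hx => ?_⟩
  obtain ⟨a, ha, _, _, hx_bdd⟩ := hf x
  obtain ⟨a', ha', b, hb₀, hxs_bdd⟩ := hf xs
  have hb : b ≠ ∞ :=
    ne_top_of_le_ne_top ha' (hxs_bdd.self_of_nhds.1.trans hxs_bdd.self_of_nhds.2)
  have small_balls {z : X} {u : Set X} (hu : u ∈ 𝓝 z) :
      ∀ᶠ r in 𝓝[>] (0 : ℝ), ball z r ⊆ u :=
    (eventually_ball_subset hu).filter_mono nhdsWithin_le_nhds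
  refine ENNReal.tendsto_div_nhds_zero_of_le_mul ha hb₀ hb (h x hx) ?_ ?_
  · filter_upwards [small_balls hx_bdd] with r hr
    exact withDensity_apply_le_mul measurableSet_ball fun y hy => (hr hy).2
  · filter_upwards [small_balls hxs_bdd] with r hr
    exact mul_le_withDensity_apply measurableSet_ball fun y hy => (hr hy).1

end PropertyM

theorem M_property_transfers_to_reweighted_measure_general
    {X : Type*} [MetricSpace X] [MeasurableSpace X] [BorelSpace X]
    (μ₀ : Measure X)
    (E : Set X)
    (hM : PropertyM μ₀ E)
    (Φ : X → ℝ)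
    (hΦbdd : ∀ s : Set X, Bornology.IsBounded s → ∃ C : ℝ, ∀ x ∈ s, |Φ x| ≤ C)
    (Z : ℝ≥0∞)
    (hZ0 : 0 < Z) (hZtop : Z < ⊤)
    (μ : Measure X)
    (hμ : μ = Z⁻¹ • μ₀.withDensity (fun x => ENNReal.ofReal (Real.exp (-Φ x)))) :
    PropertyM μ E := by
  rw [hμ]
  refine (hM.withDensity fun x => ?_).smul (ENNReal.inv_ne_zero.2 hZtop.ne)
    (ENNReal.inv_ne_top.2 hZ0.ne')
  obtain ⟨C, hC⟩ := hΦbdd (ball x 1) isBounded_ball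
  refine ⟨ENNReal.ofReal (Real.exp C), ofReal_ne_top, ENNReal.ofReal (Real.exp (-C)),
    (ofReal_pos.2 (Real.exp_pos _)).ne', ?_⟩
  filter_upwards [ball_mem_nhds x one_pos] with y hy
  exact ENNReal.ofReal_exp_neg_mem_Icc_of_abs_le (hC y hy)

theorem M_property_transfers_to_reweighted_measure
    {X : Type*} [MetricSpace X] [MeasurableSpace X] [BorelSpace X]
    (μ₀ : Measure X) [IsProbabilityMeasure μ₀]
    (E : Set X) (hE : E.Nonempty) (hEsupp : E ⊆ measureSupport μ₀)
    (I : X → ℝ) (hI : IsOMFunctional μ₀ E I)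
    (hM : PropertyM μ₀ E)
    (Φ : X → ℝ) (hΦmeas : Measurable Φ)
    (hΦbdd : ∀ s : Set X, Bornology.IsBounded s → ∃ C : ℝ, ∀ x ∈ s, |Φ x| ≤ C)
    (Z : ℝ≥0∞) (hZ : Z = ∫⁻ x, ENNReal.ofReal (Real.exp (-Φ x)) ∂μ₀)
    (hZ0 : 0 < Z) (hZtop : Z < ⊤)
    (μ : Measure X)
    (hμ : μ = Z⁻¹ • μ₀.withDensity (fun x => ENNReal.ofReal (Real.exp (-Φ x))))
    [IsProbabilityMeasure μ] :
    PropertyM μ E :=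
  M_property_transfers_to_reweighted_measure_general μ₀ E hM Φ hΦbdd Z hZ0 hZtop μ hμ
end
end

section
/- Let X be a metric space, let μ₀ be a Borel probability measure on X, and suppose μ₀ has an Onsager–Machlup functional on a nonempty subset E ⊆ supp(μ₀). If property M(μ₀, E) holds, then no point of X ∖ E is a global weak mode of μ₀; that is, for every x ∈ X ∖ E, either x ∉ supp(μ₀) or there exists v ∈ X with limsup_{r→0} μ₀(B(v,r))/μ₀(B(x,r)) > 1. -/
open MeasureTheory Metric Filter Set Topology ENNReal

noncomputable section

theorem M_property_excludes_global_weak_modes_outside_E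
    {X : Type*} [MetricSpace X] [MeasurableSpace X] [BorelSpace X]
    (μ₀ : Measure X) [IsProbabilityMeasure μ₀]
    (E : Set X) (hE : E.Nonempty) (hEsupp : E ⊆ measureSupport μ₀)
    (I : X → ℝ) (hI : IsOMFunctional μ₀ E I)
    (hM : PropertyM μ₀ E) :
    ∀ x ∉ E, x ∉ measureSupport μ₀ ∨
      ∃ v : X, 1 < Filter.limsup
        (fun r : ℝ => μ₀ (Metric.ball v r) / μ₀ (Metric.ball x r)) (𝓝[>] 0) := by
  intro x hx
  by_cases hsupp : x ∈ measureSupport μ₀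
  · right
    obtain ⟨xs, hxs, hMx⟩ := hM
    refine ⟨xs, ?_⟩
    have htend : Filter.Tendsto
        (fun r : ℝ => μ₀ (Metric.ball xs r) / μ₀ (Metric.ball x r)) (𝓝[>] 0) (𝓝 ⊤) := by
      have h0 := hMx x hx
      have hinv : Filter.Tendsto
          (fun r : ℝ => (μ₀ (Metric.ball x r) / μ₀ (Metric.ball xs r))⁻¹)
          (𝓝[>] 0) (𝓝 (0 : ℝ≥0∞)⁻¹) := ENNReal.tendsto_inv_iff.2 h0
      rw [ENNReal.inv_zero] at hinv
      refine hinv.congr' ?_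
      filter_upwards [self_mem_nhdsWithin] with r hr
      have hxr : μ₀ (Metric.ball x r) ≠ 0 := (hsupp r hr).ne'
      have hxtop : μ₀ (Metric.ball x r) ≠ ⊤ := measure_ne_top _ _
      rw [ENNReal.inv_div (Or.inr hxtop) (Or.inr hxr)]
    have := htend.limsup_eq
    rw [this]
    exact one_lt_top
  · exact Or.inl hsupp
end
end

section
/- Let X be a metric space, let μ be a Borel probability measure on X, and let x₁, x₂ ∈ X with x₂ ∈ supp(μ). Define, for ε > 0, R°(ε) := μ(B(x₁,ε))/μ(B(x₂,ε)) using open balls and R̄(ε) := μ(B̄(x₁,ε))/μ(B̄(x₂,ε)) using closed balls. Then limsup_{ε→0} R̄(ε) = limsup_{ε→0} R°(ε). -/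
open MeasureTheory Metric Filter Set Topology ENNReal

noncomputable section

/-- Continuity from below along closed balls. -/
lemma tendsto_measure_closedBall_to_ball {X : Type*} [MetricSpace X] [MeasurableSpace X]
    (μ : Measure X) (x : X) {ε : ℝ} (hε : 0 < ε) :
    Tendsto (fun n : ℕ => μ (Metric.closedBall x (ε - ε / (n + 2)))) atTop
      (𝓝 (μ (Metric.ball x ε))) := by
  have hmono : Monotone fun n : ℕ => Metric.closedBall x (ε - ε / (n + 2)) := by
    intro n m hnm
    apply Metric.closedBall_subset_closedBall
    have : ε / (m + 2) ≤ ε / (n + 2) := by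
      apply div_le_div_of_nonneg_left hε.le (by positivity)
      exact_mod_cast by omega
    linarith
  have hU : (⋃ n : ℕ, Metric.closedBall x (ε - ε / (n + 2))) = Metric.ball x ε := by
    ext y
    simp only [mem_iUnion, Metric.mem_closedBall, Metric.mem_ball]
    constructor
    · rintro ⟨n, hn⟩
      have : 0 < ε / (n + 2) := by positivity
      linarith
    · intro hy
      have htend : Tendsto (fun n : ℕ => ε / (n + 2)) atTop (𝓝 0) := by
        apply Tendsto.div_atTop tendsto_const_nhds
        exact tendsto_atTop_add_const_right _ 2 tendsto_natCast_atTop_atTop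
      have := htend.eventually_le_const (show (0:ℝ) < ε - dist y x by linarith)
      obtain ⟨n, hn⟩ := this.exists
      exact ⟨n, by linarith⟩
  rw [← hU]
  exact tendsto_measure_iUnion_atTop hmono

/-- Continuity from above along open balls. -/
lemma tendsto_measure_ball_to_closedBall {X : Type*} [MetricSpace X] [MeasurableSpace X]
    [BorelSpace X] (μ : Measure X) [IsProbabilityMeasure μ] (x : X) (ε : ℝ) :
    Tendsto (fun n : ℕ => μ (Metric.ball x (ε + 1 / (n + 1)))) atTop
      (𝓝 (μ (Metric.closedBall x ε))) := by
  have hanti : Antitone fun n : ℕ => Metric.ball x (ε + 1 / (n + 1)) := by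
    intro n m hnm
    apply Metric.ball_subset_ball
    have : (1:ℝ) / (m + 1) ≤ 1 / (n + 1) := by
      apply div_le_div_of_nonneg_left one_pos.le (by positivity)
      exact_mod_cast by omega
    linarith
  have hI : (⋂ n : ℕ, Metric.ball x (ε + 1 / (n + 1))) = Metric.closedBall x ε := by
    ext y
    simp only [mem_iInter, Metric.mem_ball, Metric.mem_closedBall]
    constructor
    · intro h
      by_contra hc
      push_neg at hc
      have htend : Tendsto (fun n : ℕ => ε + 1 / ((n:ℝ) + 1)) atTop (𝓝 (ε + 0)) := by
        apply tendsto_const_nhds.add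
        apply Tendsto.div_atTop tendsto_const_nhds
        exact tendsto_atTop_add_const_right _ 1 tendsto_natCast_atTop_atTop
      rw [add_zero] at htend
      have := htend.eventually_lt_const hc
      obtain ⟨n, hn⟩ := this.exists
      exact absurd (h n) (not_lt.2 hn.le)
    · intro h n
      have : (0:ℝ) < 1 / (n + 1) := by positivity
      linarith
  rw [← hI]
  exact tendsto_measure_iInter_atTop
    (fun n => (measurableSet_ball).nullMeasurableSet) hanti ⟨0, measure_ne_top μ _⟩

theorem limsup_closed_ball_ratio_eq_limsup_open_ball_ratio
    {X : Type*} [MetricSpace X] [MeasurableSpace X] [BorelSpace X]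
    (μ : Measure X) [IsProbabilityMeasure μ]
    (x₁ x₂ : X) (hx₂ : x₂ ∈ measureSupport μ) :
    Filter.limsup
        (fun ε : ℝ => μ (Metric.closedBall x₁ ε) / μ (Metric.closedBall x₂ ε)) (𝓝[>] 0)
      = Filter.limsup
        (fun ε : ℝ => μ (Metric.ball x₁ ε) / μ (Metric.ball x₂ ε)) (𝓝[>] 0) := by
  have hball_pos : ∀ ε : ℝ, 0 < ε → 0 < μ (Metric.ball x₂ ε) := fun ε hε => hx₂ ε hε
  have hcball_pos : ∀ ε : ℝ, 0 < ε → 0 < μ (Metric.closedBall x₂ ε) := fun ε hε =>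
    lt_of_lt_of_le (hball_pos ε hε) (measure_mono Metric.ball_subset_closedBall)
  apply le_antisymm
  · -- limsup closed ≤ limsup open
    apply le_of_forall_gt_imp_ge_of_dense
    intro a ha
    have hev : ∀ᶠ ε in 𝓝[>] (0:ℝ),
        μ (Metric.ball x₁ ε) / μ (Metric.ball x₂ ε) < a :=
      eventually_lt_of_limsup_lt ha
    rcases mem_nhdsGT_iff_exists_Ioo_subset.mp hev with ⟨δ, hδmem, hδ⟩
    simp only [mem_Ioi] at hδmem
    apply limsup_le_of_le
    · isBoundedDefault
    · filter_upwards [Ioo_mem_nhdsGT_of_mem (left_mem_Ico.2 hδmem)] with ε hε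
      obtain ⟨hε0, hεδ⟩ := hε
      rcases eq_top_or_lt_top a with rfl | haT
      · exact le_top
      rw [ENNReal.div_le_iff (hcball_pos ε hε0).ne' (measure_ne_top μ _)]
      -- show μ C₁ε ≤ a * μ C₂ε using radii ε + 1/(n+1)
      have h1 := tendsto_measure_ball_to_closedBall μ x₂ ε
      have h2 : Tendsto (fun n : ℕ => a * μ (Metric.ball x₂ (ε + 1 / (n + 1)))) atTop
          (𝓝 (a * μ (Metric.closedBall x₂ ε))) :=
        ENNReal.Tendsto.const_mul h1 (Or.inr haT.ne)
      apply ge_of_tendsto h2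
      -- eventually ε + 1/(n+1) < δ
      have htend : Tendsto (fun n : ℕ => ε + 1 / ((n:ℝ) + 1)) atTop (𝓝 (ε + 0)) := by
        apply tendsto_const_nhds.add
        apply Tendsto.div_atTop tendsto_const_nhds
        exact tendsto_atTop_add_const_right _ 1 tendsto_natCast_atTop_atTop
      rw [add_zero] at htend
      filter_upwards [htend.eventually_lt_const hεδ] with n hn
      have hpos : (0:ℝ) < ε + 1 / (n + 1) := by positivity
      have hg' : μ (Metric.ball x₁ (ε + 1 / (n + 1))) / μ (Metric.ball x₂ (ε + 1 / (n + 1))) < a := hδ ⟨hpos, hn⟩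
      have hg := hg'.le
      rw [ENNReal.div_le_iff (hball_pos _ hpos).ne' (measure_ne_top μ _)] at hg
      calc μ (Metric.closedBall x₁ ε) ≤ μ (Metric.ball x₁ (ε + 1 / (n + 1))) :=
            measure_mono (Metric.closedBall_subset_ball (lt_add_of_pos_right ε (by positivity)))
        _ ≤ a * μ (Metric.ball x₂ (ε + 1 / (n + 1))) := hg
  · -- limsup open ≤ limsup closed
    apply le_of_forall_gt_imp_ge_of_dense
    intro a ha
    have hev : ∀ᶠ ε in 𝓝[>] (0:ℝ),
        μ (Metric.closedBall x₁ ε) / μ (Metric.closedBall x₂ ε) < a :=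
      eventually_lt_of_limsup_lt ha
    rcases mem_nhdsGT_iff_exists_Ioo_subset.mp hev with ⟨δ, hδmem, hδ⟩
    simp only [mem_Ioi] at hδmem
    apply limsup_le_of_le
    · isBoundedDefault
    · filter_upwards [Ioo_mem_nhdsGT_of_mem (left_mem_Ico.2 hδmem)] with ε hε
      obtain ⟨hε0, hεδ⟩ := hε
      rw [ENNReal.div_le_iff (hball_pos ε hε0).ne' (measure_ne_top μ _)]
      have h1 := tendsto_measure_closedBall_to_ball μ x₁ hε0
      apply le_of_tendsto h1
      apply Eventually.of_forall
      intro n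
      have hlt : ε - ε / (n + 2) < ε := by
        have : 0 < ε / ((n:ℝ) + 2) := by positivity
        linarith
      have h0 : 0 < ε - ε / (n + 2) := by
        have h2 : ε / ((n:ℝ) + 2) ≤ ε / 2 :=
          div_le_div_of_nonneg_left hε0.le two_pos (by exact_mod_cast by omega)
        linarith
      have hf' : μ (Metric.closedBall x₁ (ε - ε / (n + 2))) / μ (Metric.closedBall x₂ (ε - ε / (n + 2))) < a := hδ ⟨h0, hlt.trans hεδ⟩
      have hf := hf'.le
      rw [ENNReal.div_le_iff (hcball_pos _ h0).ne' (measure_ne_top μ _)] at hf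
      calc μ (Metric.closedBall x₁ (ε - ε / (n + 2)))
          ≤ a * μ (Metric.closedBall x₂ (ε - ε / (n + 2))) := hf
        _ ≤ a * μ (Metric.ball x₂ ε) :=
            mul_le_mul_right (measure_mono (Metric.closedBall_subset_ball hlt)) _
end
end

section
/- Let X be a metric space, let μ be a Borel probability measure on X, and let x₁, x₂ ∈ X with x₂ ∈ supp(μ). Define, for ε > 0, R°(ε) := μ(B(x₁,ε))/μ(B(x₂,ε)) using open balls and R̄(ε) := μ(B̄(x₁,ε))/μ(B̄(x₂,ε)) using closed balls. Then liminf_{ε→0} R̄(ε) = liminf_{ε→0} R°(ε). -/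
open MeasureTheory Metric Filter Set Topology ENNReal

noncomputable section

/-!
By continuity of measure, `μ (closedBall x r') → μ (ball x r)` as `r' → r⁻` and
`μ (ball x r') → μ (closedBall x r)` as `r' → r⁺`. As the denominators are positive for `r > 0`,
each ratio is, at every small radius, a one-sided limit of the other ratio at nearby radii. Hence
any eventual lower bound of one ratio near `0⁺` is also one of the other, and the two liminfs,
being suprema of these lower bounds, agree.
-/

theorem tendsto_measure_biUnion_lt {α ι : Type*} [MeasurableSpace α] {μ : Measure α}
    [LinearOrder ι] [TopologicalSpace ι] [OrderTopology ι] [FirstCountableTopology ι]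
    {s : ι → Set α} {a : ι} (hm : ∀ i j, i ≤ j → j < a → s i ⊆ s j) :
    Tendsto (μ ∘ s) (𝓝[<] a) (𝓝 (μ (⋃ r < a, s r))) := by
  by_cases ha : Order.IsSuccPrelimit a
  · have : (atTop : Filter (Iio a)).IsCountablyGenerated := by
      rw [← comap_coe_Iio_nhdsLT a ha]
      infer_instance
    simp_rw [← map_coe_Iio_atTop a ha, tendsto_map'_iff, ← mem_Iio, biUnion_eq_iUnion]
    exact tendsto_measure_iUnion_atTop fun i j h ↦ hm i j h j.2
  · rw [Order.not_isSuccPrelimit_iff] at ha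
    rcases ha with ⟨b, hab⟩
    simp [hab.nhdsLT]

theorem tendsto_measure_closedBall_nhdsLT {X : Type*} [PseudoMetricSpace X] [MeasurableSpace X]
    (μ : Measure X) (x : X) (r : ℝ) :
    Tendsto (fun r' ↦ μ (closedBall x r')) (𝓝[<] r) (𝓝 (μ (ball x r))) := by
  rw [← biUnion_lt_closedBall]
  exact tendsto_measure_biUnion_lt fun _ _ h _ ↦ closedBall_subset_closedBall h

theorem tendsto_measure_ball_nhdsGT {X : Type*} [PseudoMetricSpace X] [MeasurableSpace X]
    [OpensMeasurableSpace X] (μ : Measure X) [IsFiniteMeasure μ] (x : X) (r : ℝ) :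
    Tendsto (fun r' ↦ μ (ball x r')) (𝓝[>] r) (𝓝 (μ (closedBall x r))) := by
  rw [← biInter_gt_ball]
  exact tendsto_measure_biInter_gt (fun _ _ ↦ measurableSet_ball.nullMeasurableSet)
    (fun _ _ _ h ↦ ball_subset_ball h) ⟨r + 1, by linarith, measure_ne_top μ _⟩

theorem liminf_nhdsWithin_le_liminf_of_tendsto {α β : Type*} [TopologicalSpace α]
    [CompleteLattice β] [TopologicalSpace β] [ClosedIciTopology β] {s : Set α} {a : α}
    {f g : α → β} {L : α → Filter α} [∀ r, (L r).NeBot] (hs : IsOpen s) (hL : ∀ r, L r ≤ 𝓝 r)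
    (h : ∀ᶠ r in 𝓝[s] a, Tendsto f (L r) (𝓝 (g r))) :
    liminf f (𝓝[s] a) ≤ liminf g (𝓝[s] a) := by
  rw [liminf_eq, liminf_eq]
  refine sSup_le_sSup fun b hb ↦ ?_
  filter_upwards [eventually_eventually_nhdsWithin.2 hb, h, self_mem_nhdsWithin]
    with r hbf hfg hrs
  rw [hs.nhdsWithin_eq hrs] at hbf
  exact ge_of_tendsto hfg (hL r hbf)

theorem liminf_closed_ball_ratio_eq_liminf_open_ball_ratio
    {X : Type*} [MetricSpace X] [MeasurableSpace X] [BorelSpace X]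
    (μ : Measure X) [IsProbabilityMeasure μ]
    (x₁ x₂ : X) (hx₂ : x₂ ∈ measureSupport μ) :
    Filter.liminf
        (fun ε : ℝ => μ (Metric.closedBall x₁ ε) / μ (Metric.closedBall x₂ ε)) (𝓝[>] 0)
      = Filter.liminf
        (fun ε : ℝ => μ (Metric.ball x₁ ε) / μ (Metric.ball x₂ ε)) (𝓝[>] 0) := by
  refine le_antisymm
    (liminf_nhdsWithin_le_liminf_of_tendsto (L := (𝓝[<] ·)) isOpen_Ioi
      (fun _ ↦ nhdsWithin_le_nhds) ?_)
    (liminf_nhdsWithin_le_liminf_of_tendsto (L := (𝓝[>] ·)) isOpen_Ioi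
      (fun _ ↦ nhdsWithin_le_nhds) ?_)
  · filter_upwards [self_mem_nhdsWithin] with r hr
    exact ENNReal.Tendsto.div (tendsto_measure_closedBall_nhdsLT μ x₁ r) (.inr (hx₂ r hr).ne')
      (tendsto_measure_closedBall_nhdsLT μ x₂ r) (.inl (measure_ne_top μ _))
  · filter_upwards [self_mem_nhdsWithin] with r hr
    have hx₂r : μ (closedBall x₂ r) ≠ 0 :=
      ((hx₂ r hr).trans_le (measure_mono ball_subset_closedBall)).ne'
    exact ENNReal.Tendsto.div (tendsto_measure_ball_nhdsGT μ x₁ r) (.inr hx₂r)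
      (tendsto_measure_ball_nhdsGT μ x₂ r) (.inl (measure_ne_top μ _))
end
end

section
/- There exists a Borel probability measure μ on ℝ (absolutely continuous with respect to Lebesgue measure) such that the points −1 and 1 both lie in supp(μ), liminf_{ε→0} μ(B(−1,ε))/μ(B(1,ε)) = 0 and limsup_{ε→0} μ(B(−1,ε))/μ(B(1,ε)) = 2, and moreover for every x ∈ supp(μ) ∖ {1} one has liminf_{ε→0} μ(B(x,ε))/μ(B(1,ε)) = 0. In particular, the 'liminf-only' version of property M(μ, {1}) holds, yet the point 1 is not a global weak mode of μ, since limsup_{ε→0} μ(B(−1,ε))/μ(B(1,ε)) = 2 > 1. -/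
open MeasureTheory Metric Filter Set Topology ENNReal

noncomputable section

open scoped ProbabilityTheory

/-!
Around `1`, the shell `(1 + r (m + 1), 1 + r m)` carries mass `Q m - Q (m + 1)` uniformly, where
`Q m = 2⁻¹ ^ 2 ^ m` and `r m = Q (m + 1)`, so that `μ(B(1, r m)) = Q m`. Around `-1` the same
shells carry twice these masses, but only for even `m`. Hence `μ(B(-1,ε)) ≤ 2 μ(B(1,ε))` for
every small `ε`, while at `ε = r m` the ratio is at least `2 (1 - Q m)` for even `m` and at most
`2 Q m` for odd `m`: since `Q (m + 1) = Q m ^ 2`, the inner shells are negligible against shell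
`m`. Every other point sees a locally bounded density, so its ball mass is `O(ε)`, negligible
against `Q m = √(r m)`. Normalising to a probability measure changes none of the ratios.
-/

lemma tsum_sub_succ_eq_of_antitone {f : ℕ → ℝ≥0∞} (hf : Antitone f)
    (hlim : Tendsto f atTop (𝓝 0)) : ∑' n, (f n - f (n + 1)) = f 0 := by
  have partial_sum : ∀ N, ∑ n ∈ Finset.range N, (f n - f (n + 1)) = f 0 - f N := by
    intro N
    induction N with
    | zero => simp
    | succ N ih =>
      rw [Finset.sum_range_succ, ih, tsub_add_tsub_cancel (hf N.zero_le) (hf N.le_succ)]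
  refine tendsto_nhds_unique (ENNReal.tendsto_nat_tsum _) ?_
  simpa [partial_sum] using ENNReal.Tendsto.sub tendsto_const_nhds hlim (.inr ENNReal.zero_ne_top)

section LimitsAlongSequences

variable {α ι β : Type*} [CompleteLinearOrder β] [TopologicalSpace β] [OrderTopology β]
  {f : α → β} {l : Filter α} {l' : Filter ι} [l'.NeBot] {u : ι → α} {b : β}

lemma liminf_le_of_tendsto_comp (hu : Tendsto u l' l) (hf : Tendsto (f ∘ u) l' (𝓝 b)) :
    liminf f l ≤ b := by
  calc liminf f l ≤ liminf f (map u l') := liminf_le_liminf_of_le hu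
    _ = b := by rw [← liminf_comp, hf.liminf_eq]

lemma le_limsup_of_tendsto_comp (hu : Tendsto u l' l) (hf : Tendsto (f ∘ u) l' (𝓝 b)) :
    b ≤ limsup f l := by
  calc b = limsup f (map u l') := by rw [← limsup_comp, hf.limsup_eq]
    _ ≤ limsup f l := limsup_le_limsup_of_le hu

end LimitsAlongSequences

lemma map_const_add_apply_ball (ν : Measure ℝ) (c x ε : ℝ) :
    ν.map (c + ·) (ball x ε) = ν (ball (x - c) ε) := by
  rw [Measure.map_apply (measurable_const_add c) measurableSet_ball, preimage_add_ball]

def shell (r : ℕ → ℝ) (n : ℕ) : Set ℝ := Ioo (r (n + 1)) (r n)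

def shellMeasure (r : ℕ → ℝ) (w : ℕ → ℝ≥0∞) : Measure ℝ :=
  Measure.sum fun n => w n • volume[|shell r n]

section ShellMeasure

variable {r : ℕ → ℝ} {w w' : ℕ → ℝ≥0∞}

lemma shellMeasure_apply {s : Set ℝ} (hs : MeasurableSet s) :
    shellMeasure r w s = ∑' n, w n * volume[|shell r n] s := by
  simp [shellMeasure, Measure.sum_apply _ hs]

lemma shellMeasure_absolutelyContinuous : shellMeasure r w ≪ volume :=
  Measure.absolutelyContinuous_sum_left fun n =>
    ProbabilityTheory.cond_absolutelyContinuous.smul_left (w n)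

lemma shellMeasure_le_smul {c : ℝ≥0∞} (h : ∀ n, w n ≤ c * w' n) :
    shellMeasure r w ≤ c • shellMeasure r w' := by
  refine Measure.le_iff.2 fun s hs => ?_
  rw [Measure.smul_apply, shellMeasure_apply hs, shellMeasure_apply hs, smul_eq_mul,
    ← ENNReal.tsum_mul_left]
  exact ENNReal.tsum_le_tsum fun n => by rw [← mul_assoc]; gcongr; exact h n

lemma measurableSet_shell {n : ℕ} : MeasurableSet (shell r n) := measurableSet_Ioo

lemma volume_shell_ne_zero (hr : StrictAnti r) (n : ℕ) : volume (shell r n) ≠ 0 := by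
  simpa [shell] using hr (Nat.lt_succ_self n)

lemma cond_shell_of_subset (hr : StrictAnti r) {n : ℕ} {s : Set ℝ} (h : shell r n ⊆ s) :
    volume[|shell r n] s = 1 := by
  rw [ProbabilityTheory.cond_apply measurableSet_shell, inter_eq_left.2 h]
  exact ENNReal.inv_mul_cancel (volume_shell_ne_zero hr n) measure_Ioo_lt_top.ne

lemma cond_shell_of_disjoint {n : ℕ} {s : Set ℝ} (h : Disjoint (shell r n) s) :
    volume[|shell r n] s = 0 := by
  rw [ProbabilityTheory.cond_apply measurableSet_shell, h.inter_eq, measure_empty, mul_zero]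

lemma shell_subset_ball (hr : Antitone r) (hr0 : ∀ n, 0 ≤ r n) {m n : ℕ} (hmn : m ≤ n) :
    shell r n ⊆ ball 0 (r m) := by
  intro y ⟨hy₁, hy₂⟩
  rw [mem_ball, Real.dist_0_eq_abs, abs_lt]
  exact ⟨by linarith [hr0 m, hr0 (n + 1)], hy₂.trans_le (hr hmn)⟩

lemma shellMeasure_univ (hr : StrictAnti r) : shellMeasure r w univ = ∑' n, w n := by
  simp [shellMeasure_apply MeasurableSet.univ, cond_shell_of_subset hr (subset_univ _)]

lemma shellMeasure_eq_zero_of_disjoint (hr : Antitone r) (hr0 : ∀ n, 0 ≤ r n) {s : Set ℝ}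
    (hs : MeasurableSet s) (h : Disjoint s (ball 0 (r 0))) : shellMeasure r w s = 0 := by
  rw [shellMeasure_apply hs]
  refine ENNReal.tsum_eq_zero.2 fun n => ?_
  rw [cond_shell_of_disjoint ((h.mono_right (shell_subset_ball hr hr0 (Nat.zero_le n))).symm),
    mul_zero]

lemma shellMeasure_ball_radius (hr : StrictAnti r) (hr0 : ∀ n, 0 ≤ r n) (m : ℕ) :
    shellMeasure r w (ball 0 (r m)) = ∑' n, w (n + m) := by
  rw [shellMeasure_apply measurableSet_ball,
    ← Summable.sum_add_tsum_nat_add' (k := m) ENNReal.summable]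
  have inner : ∀ n < m, volume[|shell r n] (ball 0 (r m)) = 0 := fun n hn =>
    cond_shell_of_disjoint <| Set.disjoint_left.2 fun y hy hy' => by
      rw [mem_ball, Real.dist_0_eq_abs] at hy'
      linarith [hy.1, hr.antitone (Nat.succ_le_of_lt hn), le_abs_self y]
  have outer : ∀ n, volume[|shell r (n + m)] (ball 0 (r m)) = 1 := fun n =>
    cond_shell_of_subset hr (shell_subset_ball hr.antitone hr0 (Nat.le_add_left m n))
  rw [Finset.sum_eq_zero fun n hn => by rw [inner n (Finset.mem_range.1 hn), mul_zero]]
  simp [outer]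

lemma exists_shellMeasure_le_mul_volume (hr : StrictAnti r) (hr0 : ∀ n, 0 ≤ r n)
    (hlim : Tendsto r atTop (𝓝 0)) (hw : ∀ n, w n ≠ ∞) {δ : ℝ} (hδ : 0 < δ) :
    ∃ C ≠ ∞, ∀ s, MeasurableSet s → Disjoint s (ball 0 δ) →
      shellMeasure r w s ≤ C * volume s := by
  obtain ⟨N, hN⟩ := (hlim.eventually (gt_mem_nhds hδ)).exists
  refine ⟨∑ n ∈ Finset.range N, w n * (volume (shell r n))⁻¹,
    ENNReal.sum_ne_top.2 fun n _ =>
      ENNReal.mul_ne_top (hw n) (ENNReal.inv_ne_top.2 (volume_shell_ne_zero hr n)),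
    fun s hs hsδ => ?_⟩
  have far : ∀ n ∉ Finset.range N, w n * volume[|shell r n] s = 0 := fun n hn => by
    have : shell r n ⊆ ball 0 δ := (shell_subset_ball hr.antitone hr0
      (not_lt.1 (Finset.mem_range.not.1 hn))).trans (ball_subset_ball hN.le)
    rw [cond_shell_of_disjoint (hsδ.mono_right this).symm, mul_zero]
  rw [shellMeasure_apply hs, tsum_eq_sum far, Finset.sum_mul]
  refine Finset.sum_le_sum fun n _ => ?_
  rw [ProbabilityTheory.cond_apply measurableSet_shell, ← mul_assoc]
  gcongr
  exact inter_subset_right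

end ShellMeasure

namespace WeakModeCounterexample

def Q (n : ℕ) : ℝ≥0∞ := 2⁻¹ ^ 2 ^ n

lemma Q_succ (n : ℕ) : Q (n + 1) = Q n * Q n := by rw [Q, Q, pow_succ, pow_mul, sq]

lemma Q_ne_zero (n : ℕ) : Q n ≠ 0 := by simp [Q]

lemma Q_ne_top (n : ℕ) : Q n ≠ ∞ := by simp [Q]

lemma Q_le_one (n : ℕ) : Q n ≤ 1 := pow_le_one₀ zero_le (by norm_num)

lemma Q_lt_one (n : ℕ) : Q n < 1 :=
  pow_lt_one₀ zero_le (ENNReal.inv_lt_one.2 one_lt_two) (by positivity)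

lemma Q_strictAnti : StrictAnti Q := strictAnti_nat_of_succ_lt fun n => by
  simpa [Q_succ] using ENNReal.mul_lt_mul_right (Q_ne_zero n) (Q_ne_top n) (Q_lt_one n)

lemma tendsto_Q : Tendsto Q atTop (𝓝 0) :=
  (ENNReal.tendsto_pow_atTop_nhds_zero_of_lt_one (ENNReal.inv_lt_one.2 one_lt_two)).comp
    (tendsto_pow_atTop_atTop_of_one_lt one_lt_two)

lemma Q_succ_div (m : ℕ) : Q (m + 1) / Q m = Q m := by
  rw [Q_succ, ENNReal.mul_div_cancel_right (Q_ne_zero m) (Q_ne_top m)]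

def r (n : ℕ) : ℝ := (Q (n + 1)).toReal

lemma r_pos (n : ℕ) : 0 < r n := ENNReal.toReal_pos (Q_ne_zero _) (Q_ne_top _)

lemma r_le_one (n : ℕ) : r n ≤ 1 :=
  ENNReal.toReal_le_of_le_ofReal zero_le_one (by simpa using Q_le_one _)

lemma r_strictAnti : StrictAnti r := fun _ _ h =>
  (ENNReal.toReal_lt_toReal (Q_ne_top _) (Q_ne_top _)).2 (Q_strictAnti (by omega))

lemma tendsto_r : Tendsto r atTop (𝓝 0) := by
  rw [← ENNReal.toReal_zero]
  exact (ENNReal.tendsto_toReal ENNReal.zero_ne_top).comp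
    (tendsto_Q.comp (tendsto_add_atTop_nat 1))

lemma ofReal_two_mul_r (n : ℕ) : ENNReal.ofReal (2 * r n) = 2 * Q (n + 1) := by
  rw [ENNReal.ofReal_mul zero_le_two, r, ENNReal.ofReal_toReal (Q_ne_top _), ENNReal.ofReal_ofNat]

lemma tendsto_r_nhdsGT {φ : ℕ → ℕ} (hφ : Tendsto φ atTop atTop) :
    Tendsto (r ∘ φ) atTop (𝓝[>] 0) :=
  tendsto_nhdsWithin_iff.2 ⟨tendsto_r.comp hφ, .of_forall fun k => r_pos (φ k)⟩

lemma tendsto_two_mul : Tendsto (fun k : ℕ => 2 * k) atTop atTop :=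
  tendsto_atTop_mono (fun k => (by omega : k ≤ 2 * k)) tendsto_id

lemma tendsto_two_mul_add_one : Tendsto (fun k : ℕ => 2 * k + 1) atTop atTop :=
  tendsto_atTop_mono (fun k => (by omega : k ≤ 2 * k + 1)) tendsto_id

def weight (n : ℕ) : ℝ≥0∞ := Q n - Q (n + 1)

def evenWeight (n : ℕ) : ℝ≥0∞ := if Even n then 2 * weight n else 0

lemma weight_ne_top (n : ℕ) : weight n ≠ ∞ := ENNReal.sub_ne_top (Q_ne_top n)

lemma weight_pos (n : ℕ) : 0 < weight n := tsub_pos_of_lt (Q_strictAnti n.lt_succ_self)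

lemma weight_div_Q (n : ℕ) : weight n / Q n = 1 - Q n := by
  have : weight n = (1 - Q n) * Q n := by
    rw [weight, Q_succ, ENNReal.sub_mul fun _ _ => Q_ne_top n, one_mul]
  rw [this, ENNReal.mul_div_cancel_right (Q_ne_zero n) (Q_ne_top n)]

lemma tsum_weight_add (m : ℕ) : ∑' n, weight (n + m) = Q m := by
  simpa [weight, add_right_comm] using tsum_sub_succ_eq_of_antitone
    (f := fun n => Q (n + m)) (fun _ _ h => Q_strictAnti.antitone (by omega))
    (tendsto_Q.comp (tendsto_add_atTop_nat m))

lemma evenWeight_le (n : ℕ) : evenWeight n ≤ 2 * weight n := by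
  unfold evenWeight; split_ifs <;> simp

lemma evenWeight_ne_top (n : ℕ) : evenWeight n ≠ ∞ :=
  ne_top_of_le_ne_top (ENNReal.mul_ne_top ENNReal.ofNat_ne_top (weight_ne_top n)) (evenWeight_le n)

def ν : Measure ℝ :=
  (shellMeasure r weight).map (1 + ·) + (shellMeasure r evenWeight).map (-1 + ·)

lemma ν_ball (x ε : ℝ) :
    ν (ball x ε) = shellMeasure r weight (ball (x - 1) ε)
      + shellMeasure r evenWeight (ball (x + 1) ε) := by
  simp [ν, map_const_add_apply_ball]

lemma shellMeasure_ball_eq_zero {w : ℕ → ℝ≥0∞} {y ε : ℝ} (hy : 2 ≤ |y|) (hε : ε ≤ 1) :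
    shellMeasure r w (ball y ε) = 0 :=
  shellMeasure_eq_zero_of_disjoint r_strictAnti.antitone (fun n => (r_pos n).le)
    measurableSet_ball (ball_disjoint_ball (by
      rw [Real.dist_0_eq_abs]; linarith [r_le_one 0]))

lemma ν_ball_one {ε : ℝ} (hε : ε ≤ 1) : ν (ball 1 ε) = shellMeasure r weight (ball 0 ε) := by
  rw [ν_ball, shellMeasure_ball_eq_zero (y := 1 + 1) (by norm_num) hε, sub_self, add_zero]

lemma ν_ball_neg_one {ε : ℝ} (hε : ε ≤ 1) :
    ν (ball (-1) ε) = shellMeasure r evenWeight (ball 0 ε) := by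
  rw [ν_ball, shellMeasure_ball_eq_zero (y := -1 - 1) (by norm_num) hε, neg_add_cancel, zero_add]

lemma ν_ball_neg_one_le {ε : ℝ} (hε : ε ≤ 1) : ν (ball (-1) ε) ≤ 2 * ν (ball 1 ε) := by
  rw [ν_ball_one hε, ν_ball_neg_one hε]
  exact shellMeasure_le_smul evenWeight_le _

lemma ν_ball_one_r (m : ℕ) : ν (ball 1 (r m)) = Q m := by
  rw [ν_ball_one (r_le_one m), shellMeasure_ball_radius r_strictAnti (fun n => (r_pos n).le),
    tsum_weight_add]

lemma ν_ball_neg_one_r (m : ℕ) : ν (ball (-1) (r m)) = ∑' n, evenWeight (n + m) := by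
  rw [ν_ball_neg_one (r_le_one m), shellMeasure_ball_radius r_strictAnti (fun n => (r_pos n).le)]

lemma two_mul_weight_le_ν_ball_neg_one_r {m : ℕ} (hm : Even m) :
    2 * weight m ≤ ν (ball (-1) (r m)) := by
  rw [ν_ball_neg_one_r]
  simpa [evenWeight, hm] using ENNReal.le_tsum (f := fun n => evenWeight (n + m)) 0

lemma ν_ball_neg_one_r_le {m : ℕ} (hm : ¬Even m) : ν (ball (-1) (r m)) ≤ 2 * Q (m + 1) := by
  rw [ν_ball_neg_one_r, tsum_eq_zero_add' ENNReal.summable, ← tsum_weight_add,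
    ← ENNReal.tsum_mul_left]
  simpa [evenWeight, hm, add_right_comm _ 1 m, add_assoc] using
    ENNReal.tsum_le_tsum fun n => evenWeight_le (n + (m + 1))

lemma ν_absolutelyContinuous : ν ≪ volume := by
  have translate : ∀ (w : ℕ → ℝ≥0∞) (c : ℝ), (shellMeasure r w).map (c + ·) ≪ volume :=
    fun w c => by
      simpa [map_add_left_eq_self] using
        shellMeasure_absolutelyContinuous.map (measurable_const_add c)
  exact (translate _ _).add_left (translate _ _)

instance : IsFiniteMeasure ν := by
  refine ⟨lt_top_iff_ne_top.2 ?_⟩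
  have hmass : ∑' n, evenWeight n ≤ 2 * Q 0 := by
    rw [← tsum_weight_add, ← ENNReal.tsum_mul_left]
    simpa using ENNReal.tsum_le_tsum evenWeight_le
  simp only [ν, Measure.add_apply, Measure.map_apply (measurable_const_add _) MeasurableSet.univ,
    preimage_univ, shellMeasure_univ r_strictAnti]
  exact ENNReal.add_ne_top.2 ⟨by simpa using (tsum_weight_add 0).trans_ne (Q_ne_top 0),
    ne_top_of_le_ne_top (ENNReal.mul_ne_top ENNReal.ofNat_ne_top (Q_ne_top 0)) hmass⟩

lemma exists_r_even_lt {ρ : ℝ} (hρ : 0 < ρ) : ∃ k, r (2 * k) < ρ :=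
  ((tendsto_r.comp tendsto_two_mul).eventually (gt_mem_nhds hρ)).exists

lemma ν_ball_one_pos {ρ : ℝ} (hρ : 0 < ρ) : 0 < ν (ball 1 ρ) := by
  obtain ⟨k, hk⟩ := exists_r_even_lt hρ
  calc 0 < Q (2 * k) := pos_iff_ne_zero.2 (Q_ne_zero _)
    _ = ν (ball 1 (r (2 * k))) := (ν_ball_one_r _).symm
    _ ≤ ν (ball 1 ρ) := measure_mono (ball_subset_ball hk.le)

lemma ν_ball_neg_one_pos {ρ : ℝ} (hρ : 0 < ρ) : 0 < ν (ball (-1) ρ) := by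
  obtain ⟨k, hk⟩ := exists_r_even_lt hρ
  calc 0 < 2 * weight (2 * k) := ENNReal.mul_pos two_ne_zero (weight_pos _).ne'
    _ ≤ ν (ball (-1) (r (2 * k))) := two_mul_weight_le_ν_ball_neg_one_r (even_two_mul k)
    _ ≤ ν (ball (-1) ρ) := measure_mono (ball_subset_ball hk.le)

instance : NeZero ν := ⟨fun h => by simpa [h] using ν_ball_one_pos one_pos⟩

lemma exists_ν_ball_le_mul_volume {x : ℝ} (h₁ : x ≠ 1) (h₂ : x ≠ -1) :
    ∃ C ≠ ∞, ∀ᶠ ε in 𝓝 0, ν (ball x ε) ≤ C * volume (ball x ε) := by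
  set δ := min |x - 1| |x + 1| / 2 with hδ_def
  have hδ : 0 < δ := by
    have : x + 1 ≠ 0 := fun h => h₂ (by linarith)
    positivity
  obtain ⟨C₁, hC₁, h₁⟩ := exists_shellMeasure_le_mul_volume (w := weight) r_strictAnti
    (fun n => (r_pos n).le) tendsto_r weight_ne_top hδ
  obtain ⟨C₂, hC₂, h₂⟩ := exists_shellMeasure_le_mul_volume (w := evenWeight) r_strictAnti
    (fun n => (r_pos n).le) tendsto_r evenWeight_ne_top hδ
  refine ⟨C₁ + C₂, ENNReal.add_ne_top.2 ⟨hC₁, hC₂⟩, ?_⟩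
  filter_upwards [gt_mem_nhds hδ] with ε hε
  have hfar : ∀ y, min |x - 1| |x + 1| ≤ |y| → Disjoint (ball y ε) (ball 0 δ) := fun y hy =>
    ball_disjoint_ball (by rw [Real.dist_0_eq_abs]; linarith)
  rw [ν_ball, add_mul]
  gcongr
  · simpa [Real.volume_ball] using h₁ _ measurableSet_ball (hfar _ (min_le_left _ _))
  · simpa [Real.volume_ball] using h₂ _ measurableSet_ball (hfar _ (min_le_right _ _))

lemma tendsto_ratio_neg_one_even :
    Tendsto (fun k => ν (ball (-1) (r (2 * k))) / ν (ball 1 (r (2 * k)))) atTop (𝓝 2) := by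
  have hlower : Tendsto (fun k => 2 * (1 - Q (2 * k))) atTop (𝓝 2) := by
    simpa using ENNReal.Tendsto.const_mul (ENNReal.Tendsto.sub tendsto_const_nhds
      (tendsto_Q.comp tendsto_two_mul) (.inl ENNReal.one_ne_top)) (.inr ENNReal.ofNat_ne_top)
  refine tendsto_of_tendsto_of_tendsto_of_le_of_le hlower tendsto_const_nhds (fun k => ?_)
    fun k => ENNReal.div_le_of_le_mul (ν_ball_neg_one_le (r_le_one _))
  rw [ν_ball_one_r, ← weight_div_Q, ← mul_div_assoc]
  exact ENNReal.div_le_div_right (two_mul_weight_le_ν_ball_neg_one_r (even_two_mul k)) _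

lemma tendsto_ratio_neg_one_odd :
    Tendsto (fun k => ν (ball (-1) (r (2 * k + 1))) / ν (ball 1 (r (2 * k + 1)))) atTop
      (𝓝 0) := by
  have hupper : Tendsto (fun k => 2 * Q (2 * k + 1)) atTop (𝓝 0) := by
    simpa using ENNReal.Tendsto.const_mul (tendsto_Q.comp tendsto_two_mul_add_one)
      (.inr ENNReal.ofNat_ne_top)
  refine tendsto_of_tendsto_of_tendsto_of_le_of_le tendsto_const_nhds hupper (fun _ => zero_le)
    fun k => ?_
  calc ν (ball (-1) (r (2 * k + 1))) / ν (ball 1 (r (2 * k + 1)))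
      ≤ 2 * Q (2 * k + 1 + 1) / Q (2 * k + 1) := by
        rw [ν_ball_one_r]
        exact ENNReal.div_le_div_right (ν_ball_neg_one_r_le (Nat.not_even_two_mul_add_one k)) _
    _ = 2 * Q (2 * k + 1) := by rw [mul_div_assoc, Q_succ_div]

lemma tendsto_ratio_of_ne {x : ℝ} (h₁ : x ≠ 1) (h₂ : x ≠ -1) :
    Tendsto (fun m => ν (ball x (r m)) / ν (ball 1 (r m))) atTop (𝓝 0) := by
  obtain ⟨C, hC, hle⟩ := exists_ν_ball_le_mul_volume h₁ h₂
  have hupper : Tendsto (fun m => C * (2 * Q m)) atTop (𝓝 0) := by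
    simpa using ENNReal.Tendsto.const_mul
      (ENNReal.Tendsto.const_mul tendsto_Q (.inr ENNReal.ofNat_ne_top)) (.inr hC)
  refine tendsto_of_tendsto_of_tendsto_of_le_of_le' tendsto_const_nhds hupper
    (.of_forall fun _ => zero_le) ?_
  filter_upwards [tendsto_r.eventually hle] with m hm
  calc ν (ball x (r m)) / ν (ball 1 (r m)) ≤ C * volume (ball x (r m)) / Q m := by
        rw [ν_ball_one_r]
        exact ENNReal.div_le_div_right hm _
    _ = C * (2 * Q m) := by
        rw [Real.volume_ball, ofReal_two_mul_r, mul_div_assoc, mul_div_assoc, Q_succ_div]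

lemma liminf_ratio_neg_one :
    liminf (fun ε => ν (ball (-1) ε) / ν (ball 1 ε)) (𝓝[>] 0) = 0 :=
  le_antisymm (liminf_le_of_tendsto_comp (tendsto_r_nhdsGT tendsto_two_mul_add_one)
    tendsto_ratio_neg_one_odd) zero_le

lemma limsup_ratio_neg_one :
    limsup (fun ε => ν (ball (-1) ε) / ν (ball 1 ε)) (𝓝[>] 0) = 2 := by
  refine le_antisymm (limsup_le_of_le (by isBoundedDefault) ?_)
    (le_limsup_of_tendsto_comp (tendsto_r_nhdsGT tendsto_two_mul) tendsto_ratio_neg_one_even)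
  filter_upwards [Ioc_mem_nhdsGT zero_lt_one] with ε hε
  exact ENNReal.div_le_of_le_mul (ν_ball_neg_one_le hε.2)

lemma liminf_ratio_of_ne {x : ℝ} (h₁ : x ≠ 1) (h₂ : x ≠ -1) :
    liminf (fun ε => ν (ball x ε) / ν (ball 1 ε)) (𝓝[>] 0) = 0 :=
  le_antisymm (liminf_le_of_tendsto_comp (tendsto_r_nhdsGT tendsto_id)
    (tendsto_ratio_of_ne h₁ h₂)) zero_le

end WeakModeCounterexample

open WeakModeCounterexample in
theorem exists_measure_liminf_M_property_but_not_global_weak_mode :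
    ∃ μ : Measure ℝ, IsProbabilityMeasure μ ∧ μ ≪ MeasureTheory.volume ∧
      (-1 : ℝ) ∈ measureSupport μ ∧ (1 : ℝ) ∈ measureSupport μ ∧
      Filter.liminf
        (fun ε : ℝ => μ (Metric.ball (-1) ε) / μ (Metric.ball 1 ε)) (𝓝[>] 0) = 0 ∧
      Filter.limsup
        (fun ε : ℝ => μ (Metric.ball (-1) ε) / μ (Metric.ball 1 ε)) (𝓝[>] 0) = 2 ∧
      (∀ x ∈ measureSupport μ \ {(1 : ℝ)},
        Filter.liminf
          (fun ε : ℝ => μ (Metric.ball x ε) / μ (Metric.ball 1 ε)) (𝓝[>] 0) = 0) ∧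
      ¬ (∀ v : ℝ, Filter.limsup
          (fun ε : ℝ => μ (Metric.ball v ε) / μ (Metric.ball 1 ε)) (𝓝[>] 0) ≤ 1) := by
  have hc₀ : (ν univ)⁻¹ ≠ 0 := ENNReal.inv_ne_zero.2 (measure_ne_top ν univ)
  have hc : (ν univ)⁻¹ ≠ ∞ := ENNReal.inv_ne_top.2 (NeZero.ne (ν univ))
  refine ⟨(ν univ)⁻¹ • ν, inferInstance, ν_absolutelyContinuous.smul_left _,
    fun ρ hρ => ENNReal.mul_pos hc₀ (ν_ball_neg_one_pos hρ).ne',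
    fun ρ hρ => ENNReal.mul_pos hc₀ (ν_ball_one_pos hρ).ne', ?_⟩
  simp only [Measure.smul_apply, smul_eq_mul, ENNReal.mul_div_mul_left _ _ hc₀ hc]
  refine ⟨liminf_ratio_neg_one, limsup_ratio_neg_one, fun x hx => ?_, fun h => ?_⟩
  · rcases eq_or_ne x (-1) with rfl | hx₁
    · exact liminf_ratio_neg_one
    · exact liminf_ratio_of_ne hx.2 hx₁
  · simpa [limsup_ratio_neg_one] using h (-1)
end
end

section
/- There exist a finite Borel measure μ on ℝ², a subset E ⊆ supp(μ), points e, f ∈ E, and functions I¹ : E → ℝ and I^∞ : E → ℝ such that I¹ is an Onsager–Machlup functional for μ on E with respect to the metric induced by the 1-norm ‖·‖₁ on ℝ², I^∞ is an Onsager–Machlup functional for μ on E with respect to the metric induced by the supremum norm ‖·‖_∞ on ℝ², and I¹(f) − I¹(e) = log √2 while I^∞(f) − I^∞(e) = −log √2; in particular I¹ and I^∞ do not differ by an additive constant, even though ‖·‖₁ and ‖·‖_∞ are Lipschitz-equivalent norms. -/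
open MeasureTheory Metric Filter Set Topology ENNReal

noncomputable section

/-!
Put Lebesgue measure on the horizontal segment `t ↦ (t, 0)` and `√2` times Lebesgue measure on
the diagonal segment `t ↦ (t, t + 2)`, `t ∈ [0, 1]`, and compare their midpoints
`e = (1/2, 0)` and `f = (1/2, 5/2)`. A ball of small radius `r` for a norm `N` centred on a segment
`p + [0, 1] • v` meets it in a piece of parameter length `2 r / N v`. Both norms give the
horizontal direction `(1, 0)` length `1`, but the diagonal direction `(1, 1)` has `1`-norm `2` and
sup-norm `1`. Hence `μ(B(e, r)) / μ(B(f, r))` tends to `2 / √2 = √2` for the `1`-norm and to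
`2 / (2√2) = 1 / √2` for the sup-norm.
-/

section SmallBallRatio

variable {X : Type*} [MeasurableSpace X] {μ : Measure X} {B : X → ℝ → Set X}

lemma tendsto_measure_div_measure_of_eventually_eq {x y : X} {a b : ℝ} (hb : 0 < b)
    (hx : ∀ᶠ r in 𝓝[>] 0, μ (B x r) = ENNReal.ofReal (a * r))
    (hy : ∀ᶠ r in 𝓝[>] 0, μ (B y r) = ENNReal.ofReal (b * r)) :
    Tendsto (fun r => μ (B x r) / μ (B y r)) (𝓝[>] 0) (𝓝 (ENNReal.ofReal (a / b))) := by
  refine tendsto_const_nhds.congr' ?_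
  filter_upwards [hx, hy, self_mem_nhdsWithin] with r hxr hyr (hr : 0 < r)
  rw [hxr, hyr, ← ENNReal.ofReal_div_of_pos (mul_pos hb hr), mul_div_mul_right _ _ hr.ne']

lemma tendsto_measure_div_measure_of_pair {e f : X} {a b : ℝ} (ha : 0 < a) (hb : 0 < b)
    (he : ∀ᶠ r in 𝓝[>] 0, μ (B e r) = ENNReal.ofReal (a * r))
    (hf : ∀ᶠ r in 𝓝[>] 0, μ (B f r) = ENNReal.ofReal (b * r))
    {I : X → ℝ} (hI : I f - I e = Real.log (a / b)) :
    ∀ x₁ ∈ ({e, f} : Set X), ∀ x₂ ∈ ({e, f} : Set X),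
      Tendsto (fun r => μ (B x₁ r) / μ (B x₂ r)) (𝓝[>] 0)
        (𝓝 (ENNReal.ofReal (Real.exp (I x₂ - I x₁)))) := by
  have hef : Real.exp (I f - I e) = a / b := by rw [hI, Real.exp_log (div_pos ha hb)]
  have hfe : Real.exp (I e - I f) = b / a := by
    rw [← neg_sub, Real.exp_neg, hef, inv_div]
  rintro x₁ (rfl | rfl) x₂ (rfl | rfl)
  · simpa [div_self ha.ne'] using tendsto_measure_div_measure_of_eventually_eq ha he he
  · simpa [hef] using tendsto_measure_div_measure_of_eventually_eq hb he hf
  · simpa [hfe] using tendsto_measure_div_measure_of_eventually_eq ha hf he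
  · simpa [div_self hb.ne'] using tendsto_measure_div_measure_of_eventually_eq hb hf hf

end SmallBallRatio

lemma mem_measureSupport_of_eventually_eq {X : Type*} [PseudoMetricSpace X] [MeasurableSpace X]
    {μ : Measure X} {x : X} {a : ℝ} (ha : 0 < a)
    (hx : ∀ᶠ r in 𝓝[>] 0, μ (ball x r) = ENNReal.ofReal (a * r)) : x ∈ measureSupport μ := by
  intro r hr
  obtain ⟨s, hs, hsr⟩ := (hx.and (Ioo_mem_nhdsGT hr)).exists
  calc 0 < ENNReal.ofReal (a * s) := ENNReal.ofReal_pos.mpr (mul_pos ha hsr.1)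
    _ = μ (ball x s) := hs.symm
    _ ≤ μ (ball x r) := measure_mono (ball_subset_ball hsr.2.le)

section Segment

variable {V : Type*} [NormedAddCommGroup V] [NormedSpace ℝ V] [MeasurableSpace V] [BorelSpace V]

def segmentMeasure (p v : V) : Measure V :=
  (volume.restrict (Icc (0 : ℝ) 1)).map fun t => p + t • v

instance isFiniteMeasure_segmentMeasure (p v : V) : IsFiniteMeasure (segmentMeasure p v) := by
  unfold segmentMeasure; infer_instance

lemma segmentMeasure_apply {v : V} (hv : v ≠ 0) (p : V) (s : Set V) :
    segmentMeasure p v s = volume ((fun t : ℝ => p + t • v) ⁻¹' s ∩ Icc 0 1) := by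
  have hemb : MeasurableEmbedding fun t : ℝ => p + t • v :=
    ((Homeomorph.addLeft p).isClosedEmbedding.comp
      (isClosedEmbedding_smul_left hv)).measurableEmbedding
  rw [segmentMeasure, hemb.map_apply, Measure.restrict_apply' measurableSet_Icc]

lemma segmentMeasure_setOf_lt {N : V → ℝ} {p v : V} (hN : ∀ t : ℝ, N (t • v) = |t| * N v)
    (hv : 0 < N v) {t₀ r : ℝ} (h₀ : r / N v ≤ t₀) (h₁ : t₀ + r / N v ≤ 1) :
    segmentMeasure p v {y | N (y - (p + t₀ • v)) < r} = ENNReal.ofReal (2 / N v * r) := by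
  have hv0 : v ≠ 0 := by
    rintro rfl
    have h0 := hN 0
    simp only [smul_zero, abs_zero, zero_mul] at h0
    exact hv.ne' h0
  have hpre :
      (fun t : ℝ => p + t • v) ⁻¹' {y | N (y - (p + t₀ • v)) < r} = ball t₀ (r / N v) := by
    ext t
    simp only [mem_preimage, mem_ofPred_eq, Real.ball_eq_Ioo, mem_Ioo, add_sub_add_left_eq_sub,
      ← sub_smul, hN, ← lt_div_iff₀ hv, abs_sub_lt_iff]
    constructor <;> rintro ⟨h, h'⟩ <;> constructor <;> linarith
  have hsub : ball t₀ (r / N v) ⊆ Icc 0 1 := by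
    rw [Real.ball_eq_Ioo]
    exact Ioo_subset_Icc_self.trans (Icc_subset_Icc (by linarith) h₁)
  rw [segmentMeasure_apply hv0, hpre, inter_eq_left.mpr hsub, Real.volume_ball]
  congr 1
  ring

lemma segmentMeasure_eq_zero_of_forall_notMem {v : V} (hv : v ≠ 0) (p : V) {s : Set V}
    (hs : ∀ t ∈ Icc (0 : ℝ) 1, p + t • v ∉ s) : segmentMeasure p v s = 0 := by
  have : (fun t : ℝ => p + t • v) ⁻¹' s ∩ Icc 0 1 = ∅ :=
    eq_empty_of_forall_notMem fun t ht => hs t ht.2 ht.1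
  rw [segmentMeasure_apply hv, this, measure_empty]

end Segment

section TwoSegments

def twoSegments : Measure (ℝ × ℝ) :=
  segmentMeasure 0 (1, 0) + ENNReal.ofReal √2 • segmentMeasure (0, 2) (1, 1)

instance isFiniteMeasure_twoSegments : IsFiniteMeasure twoSegments := by
  have := (segmentMeasure ((0 : ℝ), (2 : ℝ)) (1, 1)).smul_finite (ENNReal.ofReal_ne_top (r := √2))
  unfold twoSegments
  infer_instance

lemma twoSegments_apply (s : Set (ℝ × ℝ)) :
    twoSegments s =
      segmentMeasure 0 (1, 0) s + ENNReal.ofReal √2 * segmentMeasure (0, 2) (1, 1) s :=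
  rfl

variable {N : ℝ × ℝ → ℝ} (hN : ∀ (t : ℝ) y, N (t • y) = |t| * N y) (hnorm : ∀ y, ‖y‖ ≤ N y)
include hN hnorm

lemma eventually_twoSegments_setOf_lower :
    ∀ᶠ r in 𝓝[>] 0,
      twoSegments {y | N (y - (1 / 2, 0)) < r} = ENNReal.ofReal (2 / N (1, 0) * r) := by
  have hv : 1 ≤ N (1, 0) := by simpa using hnorm (1, 0)
  filter_upwards [Ioo_mem_nhdsGT (show (0 : ℝ) < 1 / 2 by norm_num)] with r hr
  have hfar : ∀ t ∈ Icc (0 : ℝ) 1,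
      (0, 2) + t • (1, 1) ∉ {y : ℝ × ℝ | N (y - (1 / 2, 0)) < r} := by
    intro t ht
    have := (norm_snd_le _).trans (hnorm ((0, 2) + t • (1, 1) - (1 / 2, 0)))
    simp only [Prod.smul_mk, smul_eq_mul, mul_one, Prod.mk_add_mk, zero_add, one_div,
      Prod.mk_sub_mk, sub_zero, Real.norm_eq_abs, mem_ofPred_eq, not_lt] at this ⊢
    linarith [le_abs_self (2 + t), hr.2, ht.1]
  have hr' : r / N (1, 0) ≤ 1 / 2 := (div_le_self hr.1.le hv).trans hr.2.le
  rw [twoSegments_apply, segmentMeasure_eq_zero_of_forall_notMem (by simp) _ hfar, mul_zero,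
    add_zero,
    show ((1 / 2 : ℝ), (0 : ℝ)) = 0 + (1 / 2 : ℝ) • ((1 : ℝ), (0 : ℝ)) by simp,
    segmentMeasure_setOf_lt (fun t => hN t _) (by linarith) hr' (by linarith)]

lemma eventually_twoSegments_setOf_upper :
    ∀ᶠ r in 𝓝[>] 0,
      twoSegments {y | N (y - (1 / 2, 5 / 2)) < r} = ENNReal.ofReal (2 * √2 / N (1, 1) * r) := by
  have hv : 1 ≤ N (1, 1) := by simpa using hnorm (1, 1)
  filter_upwards [Ioo_mem_nhdsGT (show (0 : ℝ) < 1 / 2 by norm_num)] with r hr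
  have hfar : ∀ t ∈ Icc (0 : ℝ) 1,
      0 + t • (1, 0) ∉ {y : ℝ × ℝ | N (y - (1 / 2, 5 / 2)) < r} := by
    intro t ht
    have := (norm_snd_le _).trans (hnorm (0 + t • (1, 0) - (1 / 2, 5 / 2)))
    simp only [Prod.smul_mk, smul_eq_mul, mul_one, mul_zero, zero_add, one_div, Prod.mk_sub_mk,
      zero_sub, norm_neg, norm_div, Real.norm_ofNat, mem_ofPred_eq, not_lt] at this ⊢
    linarith [hr.2]
  have hr' : r / N (1, 1) ≤ 1 / 2 := (div_le_self hr.1.le hv).trans hr.2.le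
  rw [twoSegments_apply, segmentMeasure_eq_zero_of_forall_notMem (by simp) _ hfar, zero_add,
    show ((1 / 2 : ℝ), (5 / 2 : ℝ)) = (0, 2) + (1 / 2 : ℝ) • ((1 : ℝ), (1 : ℝ)) by norm_num,
    segmentMeasure_setOf_lt (fun t => hN t _) (by linarith) hr' (by linarith),
    ← ENNReal.ofReal_mul (Real.sqrt_nonneg 2)]
  congr 1
  ring

end TwoSegments

lemma abs_fst_add_abs_snd_smul (t : ℝ) (y : ℝ × ℝ) :
    |(t • y).1| + |(t • y).2| = |t| * (|y.1| + |y.2|) := by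
  simp only [Prod.smul_fst, Prod.smul_snd, smul_eq_mul, abs_mul, mul_add]

lemma norm_le_abs_fst_add_abs_snd (y : ℝ × ℝ) : ‖y‖ ≤ |y.1| + |y.2| := by
  rw [Prod.norm_def, Real.norm_eq_abs, Real.norm_eq_abs]
  exact max_le (le_add_of_nonneg_right (abs_nonneg _)) (le_add_of_nonneg_left (abs_nonneg _))

lemma eventually_twoSegments_l1_lower :
    ∀ᶠ r in 𝓝[>] 0,
      twoSegments {y | |y.1 - (1 / 2 : ℝ)| + |y.2 - 0| < r} = ENNReal.ofReal (2 * r) := by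
  convert eventually_twoSegments_setOf_lower (N := fun y => |y.1| + |y.2|)
    abs_fst_add_abs_snd_smul norm_le_abs_fst_add_abs_snd using 4
  · rfl
  · norm_num

lemma eventually_twoSegments_l1_upper :
    ∀ᶠ r in 𝓝[>] 0,
      twoSegments {y | |y.1 - (1 / 2 : ℝ)| + |y.2 - 5 / 2| < r} = ENNReal.ofReal (√2 * r) := by
  convert eventually_twoSegments_setOf_upper (N := fun y => |y.1| + |y.2|)
    abs_fst_add_abs_snd_smul norm_le_abs_fst_add_abs_snd using 4
  · rfl
  · norm_num

lemma eventually_twoSegments_ball_lower :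
    ∀ᶠ r in 𝓝[>] 0, twoSegments (ball (1 / 2, 0) r) = ENNReal.ofReal (2 * r) := by
  convert eventually_twoSegments_setOf_lower (N := norm) norm_smul fun _ => le_rfl using 4
  · exact Set.ext fun _ => mem_ball_iff_norm
  · norm_num

lemma eventually_twoSegments_ball_upper :
    ∀ᶠ r in 𝓝[>] 0, twoSegments (ball (1 / 2, 5 / 2) r) = ENNReal.ofReal (2 * √2 * r) := by
  convert eventually_twoSegments_setOf_upper (N := norm) norm_smul fun _ => le_rfl using 4
  · exact Set.ext fun _ => mem_ball_iff_norm
  · norm_num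

/-- On `ℝ × ℝ` the product metric is induced by the supremum norm, so `Metric.ball`
is the `∞`-norm ball; the `1`-norm ball is written out explicitly. -/
theorem exists_measure_with_distinct_OM_functionals_for_equivalent_norms :
    ∃ (μ : Measure (ℝ × ℝ)) (E : Set (ℝ × ℝ)) (e f : ℝ × ℝ) (I1 Iinf : ℝ × ℝ → ℝ),
      IsFiniteMeasure μ ∧ E ⊆ measureSupport μ ∧ e ∈ E ∧ f ∈ E ∧
      (∀ x₁ ∈ E, ∀ x₂ ∈ E,
        Filter.Tendsto (fun r : ℝ =>
            μ {y : ℝ × ℝ | |y.1 - x₁.1| + |y.2 - x₁.2| < r}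
              / μ {y : ℝ × ℝ | |y.1 - x₂.1| + |y.2 - x₂.2| < r})
          (𝓝[>] 0) (𝓝 (ENNReal.ofReal (Real.exp (I1 x₂ - I1 x₁))))) ∧
      (∀ x₁ ∈ E, ∀ x₂ ∈ E,
        Filter.Tendsto (fun r : ℝ => μ (Metric.ball x₁ r) / μ (Metric.ball x₂ r))
          (𝓝[>] 0) (𝓝 (ENNReal.ofReal (Real.exp (Iinf x₂ - Iinf x₁))))) ∧
      I1 f - I1 e = Real.log (Real.sqrt 2) ∧
      Iinf f - Iinf e = - Real.log (Real.sqrt 2) ∧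
      ¬ ∃ c : ℝ, ∀ x ∈ E, Iinf x = I1 x + c := by
  have hlog : 0 < Real.log √2 := Real.log_pos Real.one_lt_sqrt_two
  refine ⟨twoSegments, {(1 / 2, 0), (1 / 2, 5 / 2)}, (1 / 2, 0), (1 / 2, 5 / 2),
    fun x => if x.2 = 0 then 0 else Real.log √2, fun x => if x.2 = 0 then 0 else -Real.log √2,
    inferInstance, ?_, by simp, by simp,
    tendsto_measure_div_measure_of_pair two_pos (by positivity) eventually_twoSegments_l1_lower
      eventually_twoSegments_l1_upper ?_,
    tendsto_measure_div_measure_of_pair two_pos (by positivity) eventually_twoSegments_ball_lower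
      eventually_twoSegments_ball_upper ?_, by norm_num, by norm_num, ?_⟩
  · rintro x (rfl | rfl)
    · exact mem_measureSupport_of_eventually_eq two_pos eventually_twoSegments_ball_lower
    · exact mem_measureSupport_of_eventually_eq (by positivity) eventually_twoSegments_ball_upper
  · norm_num [Real.div_sqrt]
  · norm_num [div_mul_cancel_left₀, Real.log_inv]
  · rintro ⟨c, hc⟩
    have hlower := hc (1 / 2, 0) (by simp)
    have hupper := hc (1 / 2, 5 / 2) (by simp)
    norm_num at hlower hupper
    linarith
end
end

section
/- Let X be a metric space, let μ₀ be a Borel probability measure on X with an Onsager–Machlup functional I₀ : E → ℝ on E ⊆ supp(μ₀), and let Φ : X → ℝ be locally uniformly continuous. Suppose Z := ∫_X exp(−Φ(x)) dμ₀(x) ∈ (0, ∞) and define the Borel probability measure μ by μ(A) = Z⁻¹ ∫_A exp(−Φ(x)) dμ₀(x). Then I := Φ|_E + I₀ is an Onsager–Machlup functional for μ on E; that is, for all u, v ∈ E, lim_{r→0} μ(B(u,r))/μ(B(v,r)) = exp((Φ(v) + I₀(v)) − (Φ(u) + I₀(u))). -/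
open MeasureTheory Metric Filter Set Topology ENNReal

noncomputable section

/-- `f` is locally uniformly continuous: near every `x` there is an increasing local modulus
of continuity `ω : [0,∞) → [0,∞]` with `ω(r) → 0` as `r → 0` and
`dist (f x′) (f x) ≤ ω (dist x′ x)` for all `x′`. -/
def LocallyUniformlyContinuous {X Y : Type*} [PseudoMetricSpace X] [PseudoMetricSpace Y]
    (f : X → Y) : Prop :=
  ∀ x : X, ∃ ω : ℝ → ℝ≥0∞,
    (∀ r s : ℝ, 0 ≤ r → r ≤ s → ω r ≤ ω s) ∧
    Filter.Tendsto ω (𝓝[≥] 0) (𝓝 0) ∧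
    ∀ x' : X, ENNReal.ofReal (dist (f x') (f x)) ≤ ω (dist x' x)

/-! On a small ball `B(x, r)` the density `exp (-Φ)` lies between `exp (-Φ x ∓ ω_x(r))`, so
`μ(B(x, r))` is `Z⁻¹ exp (-Φ x) μ₀(B(x, r))` up to a factor `exp (±ω_x(r)) → 1`. In the ratio of
two such balls `Z⁻¹` cancels, and the bounds squeeze it to `exp (Φ v - Φ u)` times the ratio
for `μ₀`, whose limit is `exp (I₀ v - I₀ u)`. -/

theorem LocallyUniformlyContinuous.exists_ball_bound {X Y : Type*} [PseudoMetricSpace X]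
    [PseudoMetricSpace Y] {f : X → Y} (hf : LocallyUniformlyContinuous f) (x : X) :
    ∃ δ : ℝ → ℝ, Tendsto δ (𝓝[>] 0) (𝓝 0) ∧
      ∀ᶠ r in 𝓝[>] 0, ∀ y ∈ ball x r, dist (f y) (f x) ≤ δ r := by
  obtain ⟨ω, hω_mono, hω_lim, hω_bound⟩ := hf x
  have hω_lim' : Tendsto ω (𝓝[>] 0) (𝓝 0) :=
    hω_lim.mono_left (nhdsWithin_mono 0 Ioi_subset_Ici_self)
  refine ⟨fun r => (ω r).toReal, ?_, ?_⟩
  · exact (ENNReal.tendsto_toReal zero_ne_top).comp hω_lim'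
  · filter_upwards [hω_lim'.eventually (gt_mem_nhds one_pos)] with r hω_lt y hy
    refine (ENNReal.ofReal_le_iff_le_toReal (hω_lt.trans one_lt_top).ne).1 ?_
    exact (hω_bound y).trans (hω_mono _ _ dist_nonneg (mem_ball.1 hy).le)

theorem setLIntegral_ofReal_exp_mem_Icc {X : Type*} [MeasurableSpace X] {μ : Measure X}
    {s : Set X} (hs : MeasurableSet s) {g : X → ℝ} {c δ : ℝ} (hg : ∀ y ∈ s, |g y - c| ≤ δ) :
    ∫⁻ y in s, ENNReal.ofReal (Real.exp (g y)) ∂μ ∈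
      Icc (ENNReal.ofReal (Real.exp (c - δ)) * μ s) (ENNReal.ofReal (Real.exp (c + δ)) * μ s) := by
  have hexp_mem : ∀ y ∈ s, ENNReal.ofReal (Real.exp (g y)) ∈
      Icc (ENNReal.ofReal (Real.exp (c - δ))) (ENNReal.ofReal (Real.exp (c + δ))) := by
    intro y hy
    obtain ⟨hlo, hhi⟩ := abs_sub_le_iff.1 (hg y hy)
    exact ⟨ENNReal.ofReal_le_ofReal (Real.exp_le_exp.2 (by linarith)),
      ENNReal.ofReal_le_ofReal (Real.exp_le_exp.2 (by linarith))⟩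
  rw [← setLIntegral_const, ← setLIntegral_const]
  exact ⟨setLIntegral_mono' hs fun y hy => (hexp_mem y hy).1,
    setLIntegral_mono' hs fun y hy => (hexp_mem y hy).2⟩

theorem LocallyUniformlyContinuous.exists_setLIntegral_ofReal_exp_neg_mem_Icc {X : Type*}
    [PseudoMetricSpace X] [MeasurableSpace X] [OpensMeasurableSpace X] {Φ : X → ℝ}
    (hΦ : LocallyUniformlyContinuous Φ) (μ : Measure X) (x : X) :
    ∃ δ : ℝ → ℝ, Tendsto δ (𝓝[>] 0) (𝓝 0) ∧ ∀ᶠ r in 𝓝[>] 0,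
      ∫⁻ y in ball x r, ENNReal.ofReal (Real.exp (-Φ y)) ∂μ ∈
        Icc (ENNReal.ofReal (Real.exp (-Φ x - δ r)) * μ (ball x r))
          (ENNReal.ofReal (Real.exp (-Φ x + δ r)) * μ (ball x r)) := by
  obtain ⟨δ, hδ, hbound⟩ := hΦ.exists_ball_bound x
  refine ⟨δ, hδ, hbound.mono fun r hr => setLIntegral_ofReal_exp_mem_Icc measurableSet_ball
    fun y hy => ?_⟩
  rw [neg_sub_neg, abs_sub_comm]
  exact hr y hy

theorem ENNReal.ofReal_exp_mul_div_ofReal_exp_mul (a b : ℝ) (x y : ℝ≥0∞) :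
    ENNReal.ofReal (Real.exp a) * x / (ENNReal.ofReal (Real.exp b) * y) =
      ENNReal.ofReal (Real.exp (a - b)) * (x / y) := by
  have hb : ENNReal.ofReal (Real.exp b) ≠ 0 := (ENNReal.ofReal_pos.2 (Real.exp_pos b)).ne'
  rw [div_eq_mul_inv, ENNReal.mul_inv (Or.inl hb) (Or.inl ofReal_ne_top), mul_mul_mul_comm,
    ← div_eq_mul_inv, ← div_eq_mul_inv, ← ENNReal.ofReal_div_of_pos (Real.exp_pos b),
    ← Real.exp_sub]

theorem ENNReal.tendsto_ofReal_exp_add_mul {α : Type*} {l : Filter α} {η : α → ℝ}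
    {g : α → ℝ≥0∞} {L : ℝ≥0∞} (hη : Tendsto η l (𝓝 0)) (hg : Tendsto g l (𝓝 L)) (k : ℝ) :
    Tendsto (fun t => ENNReal.ofReal (Real.exp (k + η t)) * g t) l
      (𝓝 (ENNReal.ofReal (Real.exp k) * L)) := by
  have hexp : Tendsto (fun t => ENNReal.ofReal (Real.exp (k + η t))) l
      (𝓝 (ENNReal.ofReal (Real.exp k))) := by
    refine ((ENNReal.continuous_ofReal.comp Real.continuous_exp).tendsto k).comp ?_
    simpa only [add_zero] using hη.const_add k
  have hpos : ENNReal.ofReal (Real.exp k) ≠ 0 := (ENNReal.ofReal_pos.2 (Real.exp_pos k)).ne'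
  exact ENNReal.Tendsto.mul hexp (Or.inl hpos) hg (Or.inr ofReal_ne_top)

theorem ENNReal.tendsto_div_of_exp_bounds {α : Type*} {l : Filter α} {a b m n : α → ℝ≥0∞}
    {εa εb : α → ℝ} {c d : ℝ} {L : ℝ≥0∞} (hεa : Tendsto εa l (𝓝 0)) (hεb : Tendsto εb l (𝓝 0))
    (ha : ∀ᶠ t in l, a t ∈ Icc (ENNReal.ofReal (Real.exp (c - εa t)) * m t)
      (ENNReal.ofReal (Real.exp (c + εa t)) * m t))
    (hb : ∀ᶠ t in l, b t ∈ Icc (ENNReal.ofReal (Real.exp (d - εb t)) * n t)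
      (ENNReal.ofReal (Real.exp (d + εb t)) * n t))
    (hmn : Tendsto (fun t => m t / n t) l (𝓝 L)) :
    Tendsto (fun t => a t / b t) l (𝓝 (ENNReal.ofReal (Real.exp (c - d)) * L)) := by
  have hε : Tendsto (fun t => εa t + εb t) l (𝓝 0) := by simpa using hεa.add hεb
  refine tendsto_of_tendsto_of_tendsto_of_le_of_le'
    (ENNReal.tendsto_ofReal_exp_add_mul (by simpa only [neg_zero] using hε.neg) hmn (c - d))
    (ENNReal.tendsto_ofReal_exp_add_mul hε hmn (c - d)) ?_ ?_
  · filter_upwards [ha, hb] with t hat hbt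
    calc ENNReal.ofReal (Real.exp (c - d + -(εa t + εb t))) * (m t / n t)
        = ENNReal.ofReal (Real.exp (c - εa t)) * m t /
            (ENNReal.ofReal (Real.exp (d + εb t)) * n t) := by
          rw [ENNReal.ofReal_exp_mul_div_ofReal_exp_mul]; ring_nf
      _ ≤ a t / b t := ENNReal.div_le_div hat.1 hbt.2
  · filter_upwards [ha, hb] with t hat hbt
    calc a t / b t
        ≤ ENNReal.ofReal (Real.exp (c + εa t)) * m t /
            (ENNReal.ofReal (Real.exp (d - εb t)) * n t) := ENNReal.div_le_div hat.2 hbt.1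
      _ = ENNReal.ofReal (Real.exp (c - d + (εa t + εb t))) * (m t / n t) := by
          rw [ENNReal.ofReal_exp_mul_div_ofReal_exp_mul]; ring_nf

theorem OM_functional_of_reweighted_measure_general
    {X : Type*} [MetricSpace X] [MeasurableSpace X] [BorelSpace X]
    (μ₀ : Measure X)
    (E : Set X)
    (I₀ : X → ℝ) (hI₀ : IsOMFunctional μ₀ E I₀)
    (Φ : X → ℝ) (hΦ : LocallyUniformlyContinuous Φ)
    (Z : ℝ≥0∞)
    (hZ0 : 0 < Z) (hZtop : Z < ⊤)
    (μ : Measure X)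
    (hμ : μ = Z⁻¹ • μ₀.withDensity (fun x => ENNReal.ofReal (Real.exp (-Φ x)))) :
    IsOMFunctional μ E (fun x => Φ x + I₀ x) := by
  intro u hu v hv
  have hratio : ∀ r : ℝ, μ (ball u r) / μ (ball v r) =
      (∫⁻ y in ball u r, ENNReal.ofReal (Real.exp (-Φ y)) ∂μ₀) /
        ∫⁻ y in ball v r, ENNReal.ofReal (Real.exp (-Φ y)) ∂μ₀ := fun r => by
    simp only [hμ, Measure.smul_apply, smul_eq_mul, withDensity_apply _ measurableSet_ball]
    exact ENNReal.mul_div_mul_left _ _ (ENNReal.inv_ne_zero.2 hZtop.ne)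
      (ENNReal.inv_ne_top.2 hZ0.ne')
  obtain ⟨δu, hδu, hu_bounds⟩ := hΦ.exists_setLIntegral_ofReal_exp_neg_mem_Icc μ₀ u
  obtain ⟨δv, hδv, hv_bounds⟩ := hΦ.exists_setLIntegral_ofReal_exp_neg_mem_Icc μ₀ v
  rw [funext hratio, show Φ v + I₀ v - (Φ u + I₀ u) = -Φ u - -Φ v + (I₀ v - I₀ u) by ring,
    Real.exp_add, ENNReal.ofReal_mul (Real.exp_pos _).le]
  exact ENNReal.tendsto_div_of_exp_bounds hδu hδv hu_bounds hv_bounds (hI₀ u hu v hv)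

theorem OM_functional_of_reweighted_measure
    {X : Type*} [MetricSpace X] [MeasurableSpace X] [BorelSpace X]
    (μ₀ : Measure X) [IsProbabilityMeasure μ₀]
    (E : Set X) (hEsupp : E ⊆ measureSupport μ₀)
    (I₀ : X → ℝ) (hI₀ : IsOMFunctional μ₀ E I₀)
    (Φ : X → ℝ) (hΦ : LocallyUniformlyContinuous Φ)
    (Z : ℝ≥0∞) (hZ : Z = ∫⁻ x, ENNReal.ofReal (Real.exp (-Φ x)) ∂μ₀)
    (hZ0 : 0 < Z) (hZtop : Z < ⊤)
    (μ : Measure X)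
    (hμ : μ = Z⁻¹ • μ₀.withDensity (fun x => ENNReal.ofReal (Real.exp (-Φ x))))
    [IsProbabilityMeasure μ] :
    IsOMFunctional μ E (fun x => Φ x + I₀ x) :=
  OM_functional_of_reweighted_measure_general μ₀ E I₀ hI₀ Φ hΦ Z hZ0 hZtop μ hμ
end
end

section
/- Let X be a metric space, let μ₀ be a Borel probability measure on X with an Onsager–Machlup functional I₀ : E → ℝ on E ⊆ supp(μ₀) for which property M(μ₀, E) holds, and let Φ : X → ℝ be locally uniformly continuous. Suppose Z := ∫_X exp(−Φ(x)) dμ₀(x) ∈ (0, ∞) and define the Borel probability measure μ by μ(A) = Z⁻¹ ∫_A exp(−Φ(x)) dμ₀(x). Then property M(μ, E) holds, i.e. there exists x⋆ ∈ E such that for every x ∈ X ∖ E, lim_{r→0} μ(B(x,r))/μ(B(x⋆,r)) = 0. -/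
/-!
Local uniform continuity of `Φ` makes the density `exp (-Φ)` pinched between two positive
constants on every small enough ball around a given point. Hence `μ(B(x,r))` and `μ₀(B(x,r))`
agree up to factors that depend on `x` but not on `r`, so each ratio
`μ(B(x,r)) / μ(B(x⋆,r))` is at most a constant times the corresponding ratio for `μ₀`, which
tends to `0`.
-/

open MeasureTheory Metric Filter Set Topology ENNReal

noncomputable section

open scoped NNReal

def SmallBallComparable {X : Type*} [PseudoMetricSpace X] [MeasurableSpace X]
    (μ ν : Measure X) : Prop :=
  ∀ x : X, ∃ c C : ℝ≥0, c ≠ 0 ∧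
    ∀ᶠ r in 𝓝[>] (0 : ℝ), c * ν (ball x r) ≤ μ (ball x r) ∧ μ (ball x r) ≤ C * ν (ball x r)

section SmallBallComparable

variable {X : Type*} [PseudoMetricSpace X] [MeasurableSpace X] {μ ν : Measure X}

theorem PropertyM.of_smallBallComparable {E : Set X} (hν : PropertyM ν E)
    (hμν : SmallBallComparable μ ν) : PropertyM μ E := by
  obtain ⟨xs, hxsE, hxs⟩ := hν
  refine ⟨xs, hxsE, fun x hx => ?_⟩
  obtain ⟨_, Cx, _, hx_ev⟩ := hμν x
  obtain ⟨cs, _, hcs, hs_ev⟩ := hμν xs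
  have hratio : ∀ᶠ r in 𝓝[>] (0 : ℝ),
      μ (ball x r) / μ (ball xs r) ≤ Cx / cs * (ν (ball x r) / ν (ball xs r)) := by
    filter_upwards [hx_ev, hs_ev] with r hrx hrs
    calc μ (ball x r) / μ (ball xs r)
        ≤ Cx * ν (ball x r) / (cs * ν (ball xs r)) := ENNReal.div_le_div hrx.2 hrs.1
      _ = Cx / cs * (ν (ball x r) / ν (ball xs r)) :=
          ENNReal.mul_div_mul_comm (Or.inl (by exact_mod_cast hcs)) (Or.inl coe_ne_top)
  have hlim : Tendsto (fun r : ℝ => Cx / cs * (ν (ball x r) / ν (ball xs r))) (𝓝[>] 0) (𝓝 0) := by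
    simpa using ENNReal.Tendsto.const_mul (hxs x hx)
      (Or.inr (ENNReal.div_ne_top coe_ne_top (by exact_mod_cast hcs)))
  exact tendsto_of_tendsto_of_tendsto_of_le_of_le' tendsto_const_nhds hlim
    (Eventually.of_forall fun _ => zero_le) hratio

theorem SmallBallComparable.smul_left (hμν : SmallBallComparable μ ν) {a : ℝ≥0∞} (ha₀ : a ≠ 0)
    (ha : a ≠ ∞) : SmallBallComparable (a • μ) ν := by
  intro x
  obtain ⟨c, C, hc, hev⟩ := hμν x
  refine ⟨a.toNNReal * c, a.toNNReal * C, mul_ne_zero (toNNReal_ne_zero.2 ⟨ha₀, ha⟩) hc, ?_⟩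
  filter_upwards [hev] with r ⟨hlo, hup⟩
  simp only [Measure.smul_apply, smul_eq_mul, coe_mul, coe_toNNReal ha, mul_assoc]
  exact ⟨mul_le_mul_right hlo a, mul_le_mul_right hup a⟩

theorem smallBallComparable_withDensity [OpensMeasurableSpace X] {f : X → ℝ≥0∞}
    (hf : ∀ x : X, ∃ c C : ℝ≥0, c ≠ 0 ∧
      ∀ᶠ r in 𝓝[>] (0 : ℝ), ∀ y ∈ ball x r, c ≤ f y ∧ f y ≤ C) :
    SmallBallComparable (ν.withDensity f) ν := by
  intro x
  obtain ⟨c, C, hc, hev⟩ := hf x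
  refine ⟨c, C, hc, ?_⟩
  filter_upwards [hev] with r hr
  rw [withDensity_apply _ measurableSet_ball, ← setLIntegral_const, ← setLIntegral_const]
  exact ⟨setLIntegral_mono' measurableSet_ball fun y hy => (hr y hy).1,
    setLIntegral_mono' measurableSet_ball fun y hy => (hr y hy).2⟩

end SmallBallComparable

theorem LocallyUniformlyContinuous.eventually_forall_ball_dist_lt {X Y : Type*}
    [PseudoMetricSpace X] [PseudoMetricSpace Y] {f : X → Y} (hf : LocallyUniformlyContinuous f)
    (x : X) {ε : ℝ} (hε : 0 < ε) :
    ∀ᶠ r in 𝓝[>] (0 : ℝ), ∀ y ∈ ball x r, dist (f y) (f x) < ε := by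
  obtain ⟨ω, hω_mono, hω_lim, hω_bound⟩ := hf x
  have hsmall : ∀ᶠ r in 𝓝[>] (0 : ℝ), ω r < ENNReal.ofReal ε :=
    (hω_lim.eventually_lt_const (ENNReal.ofReal_pos.2 hε)).filter_mono
      (nhdsWithin_mono 0 Ioi_subset_Ici_self)
  filter_upwards [hsmall] with r hr y hy
  have : ENNReal.ofReal (dist (f y) (f x)) < ENNReal.ofReal ε :=
    ((hω_bound y).trans (hω_mono _ _ dist_nonneg (le_of_lt hy))).trans_lt hr
  exact (ENNReal.ofReal_lt_ofReal_iff hε).1 this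

theorem LocallyUniformlyContinuous.exists_bounds_ofReal_exp_neg {X : Type*} [PseudoMetricSpace X]
    {Φ : X → ℝ} (hΦ : LocallyUniformlyContinuous Φ) (x : X) :
    ∃ c C : ℝ≥0, c ≠ 0 ∧ ∀ᶠ r in 𝓝[>] (0 : ℝ), ∀ y ∈ ball x r,
      c ≤ ENNReal.ofReal (Real.exp (-Φ y)) ∧ ENNReal.ofReal (Real.exp (-Φ y)) ≤ C := by
  refine ⟨(Real.exp (-Φ x - 1)).toNNReal, (Real.exp (-Φ x + 1)).toNNReal,
    (Real.toNNReal_pos.2 (Real.exp_pos _)).ne', ?_⟩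
  filter_upwards [hΦ.eventually_forall_ball_dist_lt x one_pos] with r hr y hy
  have hΦy := abs_lt.1 (Real.dist_eq _ _ ▸ hr y hy)
  exact ⟨ENNReal.ofReal_le_ofReal (Real.exp_le_exp.2 (by linarith)),
    ENNReal.ofReal_le_ofReal (Real.exp_le_exp.2 (by linarith))⟩

theorem M_property_of_reweighted_measure_loc_unif_cts_general
    {X : Type*} [MetricSpace X] [MeasurableSpace X] [BorelSpace X]
    (μ₀ : Measure X)
    (E : Set X)
    (hM : PropertyM μ₀ E)
    (Φ : X → ℝ) (hΦ : LocallyUniformlyContinuous Φ)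
    (Z : ℝ≥0∞)
    (hZ0 : 0 < Z) (hZtop : Z < ⊤)
    (μ : Measure X)
    (hμ : μ = Z⁻¹ • μ₀.withDensity (fun x => ENNReal.ofReal (Real.exp (-Φ x)))) :
    PropertyM μ E := by
  have hcomp : SmallBallComparable μ μ₀ := by
    rw [hμ]
    exact (smallBallComparable_withDensity hΦ.exists_bounds_ofReal_exp_neg).smul_left
      (ENNReal.inv_ne_zero.2 hZtop.ne) (ENNReal.inv_ne_top.2 hZ0.ne')
  exact hM.of_smallBallComparable hcomp

theorem M_property_of_reweighted_measure_loc_unif_cts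
    {X : Type*} [MetricSpace X] [MeasurableSpace X] [BorelSpace X]
    (μ₀ : Measure X) [IsProbabilityMeasure μ₀]
    (E : Set X) (hEsupp : E ⊆ measureSupport μ₀)
    (I₀ : X → ℝ) (hI₀ : IsOMFunctional μ₀ E I₀)
    (hM : PropertyM μ₀ E)
    (Φ : X → ℝ) (hΦ : LocallyUniformlyContinuous Φ)
    (Z : ℝ≥0∞) (hZ : Z = ∫⁻ x, ENNReal.ofReal (Real.exp (-Φ x)) ∂μ₀)
    (hZ0 : 0 < Z) (hZtop : Z < ⊤)
    (μ : Measure X)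
    (hμ : μ = Z⁻¹ • μ₀.withDensity (fun x => ENNReal.ofReal (Real.exp (-Φ x))))
    [IsProbabilityMeasure μ] :
    PropertyM μ E :=
  M_property_of_reweighted_measure_loc_unif_cts_general μ₀ E hM Φ hΦ Z hZ0 hZtop μ hμ
end
end
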